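/- arXiv:1311.3249 — 2 statements merged into one kernel-verified Lean document; each statement's English description precedes it below -/
import Mathlib

section
/- Let K be a finite extension of Q_p and χ_1, χ_2 smooth characters of O_K^× of levels n_1 and n_2 respectively with n_1 ≥ n_2 + 1. Let u = [[1, x],[0,1]] be an element of the upper triangular unipotent subgroup of GL_2(K) with x ∉ O_K. Then u does not intertwine the character χ = χ_1 ⊗ χ_2 of the diagonal torus T^0 = O_K^× × O_K^×; concretely, setting n = n_1 − v(x), there exist a, d ∈ O_K^× and c ∈ O_K with χ_1(a + xϖ^n c)χ_2(d − xϖ^n c) ≠ χ_1(a)χ_2(d). -/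
/-!
Since `χ₁` has level exactly `n₁ ≥ 1`, some `u ≡ 1 mod ϖ^n₁` has `χ₁ u ≠ 1`; as `v(y) = n₁`,
we can write `u - 1 = y c`. Taking `a = 1`, `d = u` gives `a + y c = u` and `d - y c = 1`, while
`χ₂ u = 1` because `n₂ < n₁`; so the two sides are `χ₁ u` and `1`.
-/

theorem IsDiscreteValuationRing.associated_pow_of_dvd_of_not_dvd
    {R : Type*} [CommRing R] [IsDomain R] [IsDiscreteValuationRing R]
    {ϖ y : R} (hϖ : Irreducible ϖ) {n : ℕ} (h : ϖ ^ n ∣ y) (h' : ¬ϖ ^ (n + 1) ∣ y) :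
    Associated y (ϖ ^ n) := by
  have hy : y ≠ 0 := by rintro rfl; exact h' (dvd_zero _)
  obtain ⟨k, hk⟩ := associated_pow_irreducible hy hϖ
  have hiff (m : ℕ) : ϖ ^ m ∣ y ↔ m ≤ k := by
    rw [hk.dvd_iff_dvd_right, pow_dvd_pow_iff hϖ.ne_zero hϖ.not_isUnit]
  obtain rfl : k = n := by have := (hiff n).1 h; have := mt (hiff (n + 1)).2 h'; omega
  exact hk

theorem stmt_2_general
    (O : Type) [CommRing O] [IsDomain O] [IsDiscreteValuationRing O]
    (ϖ : O) (hϖ : Irreducible ϖ)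
    (L : Type) [Field L]
    (χ₁ χ₂ : Oˣ →* Lˣ) (n₁ n₂ : ℕ)
    -- χ₁ has level n₁ :
    (hχ₁' : ∀ m : ℕ, m < n₁ →
      ¬ ∀ u : Oˣ, (u : O) - 1 ∈ Ideal.span ({ϖ ^ (m + 1)} : Set O) → χ₁ u = 1)
    -- χ₂ has level n₂ :
    (hχ₂ : ∀ u : Oˣ, (u : O) - 1 ∈ Ideal.span ({ϖ ^ (n₂ + 1)} : Set O) → χ₂ u = 1)
    (hn : n₂ + 1 ≤ n₁)
    -- y = x·ϖ^n where x ∉ O and n = n₁ − v(x), so v(y) = n₁ exactly :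
    (y : O) (hy : y ∈ Ideal.span ({ϖ ^ n₁} : Set O))
    (hy' : y ∉ Ideal.span ({ϖ ^ (n₁ + 1)} : Set O)) :
    ∃ (a d : Oˣ) (c : O) (h₁ : IsUnit ((a : O) + y * c)) (h₂ : IsUnit ((d : O) - y * c)),
      χ₁ h₁.unit * χ₂ h₂.unit ≠ χ₁ a * χ₂ d := by
  simp only [Ideal.mem_span_singleton] at hχ₁' hχ₂ hy hy'
  obtain ⟨u, hu, hχ₁u⟩ : ∃ u : Oˣ, ϖ ^ n₁ ∣ (u : O) - 1 ∧ χ₁ u ≠ 1 := by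
    have := hχ₁' (n₁ - 1) (by omega)
    push Not at this
    rwa [Nat.sub_add_cancel (by omega)] at this
  obtain ⟨c, hc⟩ : y ∣ (u : O) - 1 :=
    ((IsDiscreteValuationRing.associated_pow_of_dvd_of_not_dvd hϖ hy hy').dvd_iff_dvd_left).2 hu
  have hχ₂u : χ₂ u = 1 := hχ₂ u ((pow_dvd_pow ϖ hn).trans hu)
  have h₁ : IsUnit ((1 : Oˣ) + y * c : O) := by rw [← hc]; simp
  have h₂ : IsUnit ((u : O) - y * c) := by rw [← hc]; simp
  refine ⟨1, u, c, h₁, h₂, ?_⟩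
  have e₁ : h₁.unit = u := Units.ext (by simp [← hc])
  have e₂ : h₂.unit = 1 := Units.ext (by simp [← hc])
  simpa [e₁, e₂, hχ₂u] using hχ₁u

theorem stmt_2
    (O : Type) [CommRing O] [IsDomain O] [IsDiscreteValuationRing O]
    (ϖ : O) (hϖ : Irreducible ϖ)
    (L : Type) [Field L]
    (χ₁ χ₂ : Oˣ →* Lˣ) (n₁ n₂ : ℕ)
    -- χ₁ has level n₁ :
    (hχ₁ : ∀ u : Oˣ, (u : O) - 1 ∈ Ideal.span ({ϖ ^ (n₁ + 1)} : Set O) → χ₁ u = 1)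
    (hχ₁' : ∀ m : ℕ, m < n₁ →
      ¬ ∀ u : Oˣ, (u : O) - 1 ∈ Ideal.span ({ϖ ^ (m + 1)} : Set O) → χ₁ u = 1)
    -- χ₂ has level n₂ :
    (hχ₂ : ∀ u : Oˣ, (u : O) - 1 ∈ Ideal.span ({ϖ ^ (n₂ + 1)} : Set O) → χ₂ u = 1)
    (hχ₂' : ∀ m : ℕ, m < n₂ →
      ¬ ∀ u : Oˣ, (u : O) - 1 ∈ Ideal.span ({ϖ ^ (m + 1)} : Set O) → χ₂ u = 1)
    (hn : n₂ + 1 ≤ n₁)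
    -- y = x·ϖ^n where x ∉ O and n = n₁ − v(x), so v(y) = n₁ exactly :
    (y : O) (hy : y ∈ Ideal.span ({ϖ ^ n₁} : Set O))
    (hy' : y ∉ Ideal.span ({ϖ ^ (n₁ + 1)} : Set O)) :
    ∃ (a d : Oˣ) (c : O) (h₁ : IsUnit ((a : O) + y * c)) (h₂ : IsUnit ((d : O) - y * c)),
      χ₁ h₁.unit * χ₂ h₂.unit ≠ χ₁ a * χ₂ d :=
  stmt_2_general O ϖ hϖ L χ₁ χ₂ n₁ n₂ hχ₁' hχ₂ hn y hy hy'
end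

section
/- Let x ∈ X_k be a closed point of the crystalline deformation space of regular crystalline representations (all d Frobenius eigenvalues on WD(D_cris(r_x)) pairwise distinct), and let A be an affinoid algebra with ideal I satisfying I² = 0. Given a free A-module D of rank d with an automorphism Φ whose matrix (a_{ij}) in a basis (e_j) satisfies a_{ij} ∈ I for i > j and a_{ii} − a_{jj} ∈ A^× for i ≠ j, then there exist unique λ_2,...,λ_d ∈ I and μ ∈ A^× such that Φ(e_1 + Σ_{j≥2} λ_j e_j) = μ(e_1 + Σ_{j≥2} λ_j e_j). Consequently any Φ̄-stable complete flag of D/ID by direct summands lifts uniquely to a Φ-stable complete flag of D by direct summands. -/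
/-!
Modulo `I` the matrix of `Φ` is upper triangular with diagonal entries whose differences are
units, so it is diagonalized by a unitriangular matrix; since `I² = 0`, a first-order correction
`1 + Y` with `Y` in `I` makes the diagonalization exact. Hence `Φ` has a basis of eigenvectors
`b k` with eigenvalues `δ k` whose differences are units, and the first one is congruent to `e₁`
modulo `I`. Normalizing it gives the eigenvector; conversely an eigenvector congruent to `e₁` has
a unit coordinate along the first `b k`, so its eigenvalue is the first `δ k` and its other
coordinates vanish.

Lagrange interpolation in `Φ` shows that a `Φ`-stable submodule `W` is the direct sum of the lines
`J k • b k`, where `J k = {a | a • b k ∈ W}`. If `W`, or its image modulo `I`, is a direct summand,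
then `J k` is generated by an idempotent, modulo `I` in the second case. Idempotents lift uniquely
along the nil ideal `I`, so every stable direct summand of `D / I D` has exactly one stable direct
summand of `D` above it; lifting is monotone, so lifts of flags are flags.
-/

namespace Ideal

variable {A : Type*} [CommRing A] {I : Ideal A}

lemma mul_eq_zero_of_sq_eq_bot (hI : I ^ 2 = ⊥) {a b : A} (ha : a ∈ I) (hb : b ∈ I) :
    a * b = 0 := by
  have : a * b ∈ I ^ 2 := pow_two I ▸ mul_mem_mul ha hb
  rwa [hI, mem_bot] at this

lemma isNilpotent_of_sq_eq_bot (hI : I ^ 2 = ⊥) {a : A} (ha : a ∈ I) : IsNilpotent a :=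
  ⟨2, by rw [pow_two]; exact mul_eq_zero_of_sq_eq_bot hI ha ha⟩

variable (hI : ∀ x ∈ I, IsNilpotent x)
include hI

lemma isUnit_add_of_isNilpotent {u a : A} (hu : IsUnit u) (ha : a ∈ I) : IsUnit (u + a) :=
  (hI a ha).isUnit_add_left_of_commute hu (Commute.all _ _)

lemma exists_isIdempotentElem_sub_mem {c : A} (hc : c * c - c ∈ I) :
    ∃ e, IsIdempotentElem e ∧ e - c ∈ I := by
  have hker : ∀ x ∈ RingHom.ker (Quotient.mk I), IsNilpotent x := fun x hx =>
    hI x (by rwa [mk_ker] at hx)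
  obtain ⟨e, he, hec⟩ := exists_isIdempotentElem_eq_of_ker_isNilpotent _ hker
    (Quotient.mk I c) ⟨c, rfl⟩ (by rw [IsIdempotentElem, ← map_mul, Quotient.eq]; exact hc)
  exact ⟨e, he, Quotient.eq.mp hec⟩

lemma mem_span_singleton_of_mem_span_singleton_sup {e f : A} (he : IsIdempotentElem e)
    (hf : IsIdempotentElem f) (h : e ∈ span {f} ⊔ I) : e ∈ span {f} := by
  obtain ⟨y, hy, i, hi, rfl⟩ := Submodule.mem_sup.mp h
  obtain ⟨r, rfl⟩ := mem_span_singleton'.mp hy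
  have hef : (r * f + i) * f = r * f + i := by
    refine eq_of_isNilpotent_sub_of_isIdempotentElem (he.mul hf) he (hI _ ?_)
    have : (r * f + i) * f - (r * f + i) = i * (f - 1) + r * (f * f - f) := by ring
    rw [this, hf.eq, sub_self, mul_zero, add_zero]
    exact mul_mem_right _ _ hi
  rw [← hef]
  exact mul_mem_left _ _ (mem_span_singleton_self f)

end Ideal

lemma IsIdempotentElem.isCompl_span_singleton {A : Type*} [CommRing A] {e : A}
    (he : IsIdempotentElem e) : IsCompl (Ideal.span {e}) (Ideal.span {1 - e}) := by
  constructor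
  · rw [Submodule.disjoint_def]
    intro a ha ha'
    obtain ⟨r, rfl⟩ := Ideal.mem_span_singleton'.mp ha
    obtain ⟨s, hs⟩ := Ideal.mem_span_singleton'.mp ha'
    linear_combination (-e) * hs - (r + s) * he.eq
  · rw [codisjoint_iff, Ideal.eq_top_iff_one]
    have h := Submodule.add_mem_sup (Ideal.mem_span_singleton_self e)
      (Ideal.mem_span_singleton_self (1 - e))
    rwa [add_sub_cancel] at h

namespace Matrix

variable {n R : Type*} [Fintype n] [CommRing R]

lemma mul_apply_mem_of_left {I : Ideal R} {X : Matrix n n R} (hX : ∀ i j, X i j ∈ I)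
    (Z : Matrix n n R) (i j : n) : (X * Z) i j ∈ I :=
  Ideal.sum_mem _ fun l _ => I.mul_mem_right _ (hX i l)

lemma mul_apply_mem_of_right {I : Ideal R} {Z : Matrix n n R} (hZ : ∀ i j, Z i j ∈ I)
    (X : Matrix n n R) (i j : n) : (X * Z) i j ∈ I :=
  Ideal.sum_mem _ fun l _ => I.mul_mem_left _ (hZ l j)

section Triangular

variable [LinearOrder n] {T : Matrix n n R}

/-- The eigenvector solves `C u = e_k`, where `C` is `T - T k k` with its `(k, k)` entry replaced
by `1`: `C` is upper triangular with unit diagonal, hence so is `C⁻¹`. -/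
lemma IsUpperTriangular.exists_mulVec_eq_smul (hT : T.IsUpperTriangular)
    (hdiag : Pairwise fun i j => IsUnit (T i i - T j j)) (k : n) :
    ∃ u : n → R, T *ᵥ u = T k k • u ∧ u k = 1 ∧ ∀ j, k < j → u j = 0 := by
  set D : Matrix n n R := diagonal fun i => T k k - (Pi.single k 1 : n → R) i
  set C := T - D
  have hC : C.IsUpperTriangular := hT.sub (blockTriangular_diagonal _)
  have hCkk : C k k = 1 := by simp [C, D]
  have hdet : IsUnit C.det := by
    rw [det_of_isUpperTriangular hC, IsUnit.prod_univ_iff]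
    intro i
    by_cases hi : i = k
    · subst hi; rw [hCkk]; exact isUnit_one
    · simpa [C, D, hi] using hdiag hi
  have := C.invertibleOfIsUnitDet hdet
  set u := C⁻¹ *ᵥ Pi.single k 1
  have hu : ∀ j, k < j → u j = 0 := fun j hj => by
    simpa [u, mulVec_single_one] using blockTriangular_inv_of_blockTriangular hC hj
  have hCu : C *ᵥ u = Pi.single k 1 := by
    rw [mulVec_mulVec, mul_nonsing_inv _ hdet, one_mulVec]
  have huk : u k = 1 := by
    have := congrFun hCu k
    rw [mulVec, dotProduct, Finset.sum_eq_single k, hCkk, one_mul] at this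
    · simpa using this
    · intro j _ hjk
      rcases lt_or_gt_of_ne hjk with h | h
      · rw [hC h, zero_mul]
      · rw [hu j h, mul_zero]
    · simp
  refine ⟨u, ?_, huk, hu⟩
  conv_lhs => rw [show T = C + D by simp [C], add_mulVec, hCu]
  ext i
  by_cases hi : i = k
  · subst hi; simp [D, mulVec_diagonal, huk]
  · simp [D, mulVec_diagonal, hi]

lemma IsUpperTriangular.exists_unitriangular_mul_diagonal (hT : T.IsUpperTriangular)
    (hdiag : Pairwise fun i j => IsUnit (T i i - T j j)) :
    ∃ U : Matrix n n R, U.IsUpperTriangular ∧ (∀ k, U k k = 1) ∧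
      T * U = U * diagonal fun k => T k k := by
  choose u hTu huk hu using hT.exists_mulVec_eq_smul hdiag
  refine ⟨of fun i k => u k i, fun i k hki => hu k i hki, huk, ?_⟩
  ext i k
  rw [mul_diagonal]
  simpa [mul_apply, mulVec, dotProduct, mul_comm] using congrFun (hTu k) i

end Triangular

/-- Conjugating by `1 + Y`, where `Y i j = N i j / (N j j - N i i)` off the diagonal, removes the
off-diagonal part of `N`: all second-order terms lie in `I ^ 2 = ⊥`. -/
lemma exists_mul_one_add_eq_of_offDiag_mem [DecidableEq n] {I : Ideal R} (hI : I ^ 2 = ⊥)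
    {N : Matrix n n R} (hoff : ∀ i j, i ≠ j → N i j ∈ I)
    (hdiag : Pairwise fun i j => IsUnit (N i i - N j j)) :
    ∃ Y : Matrix n n R, (∀ i j, Y i j ∈ I) ∧
      N * (1 + Y) = (1 + Y) * diagonal fun k => N k k := by
  set Y : Matrix n n R := of fun i j => if i = j then 0 else Ring.inverse (N j j - N i i) * N i j
  have hY : ∀ i j, Y i j ∈ I := fun i j => by
    by_cases h : i = j
    · simp [Y, h]
    · simpa [Y, h] using I.mul_mem_left _ (hoff i j h)
  have hNY : ∀ i j, (N * Y) i j = N i i * Y i j := fun i j => by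
    refine Finset.sum_eq_single i (fun l _ hl => ?_) (by simp)
    exact Ideal.mul_eq_zero_of_sq_eq_bot hI (hoff i l (Ne.symm hl)) (hY l j)
  refine ⟨Y, hY, ?_⟩
  ext i j
  rw [mul_add, add_mul, mul_one, one_mul, add_apply, add_apply, hNY, mul_diagonal]
  by_cases h : i = j
  · subst h; simp [Y]
  · have := Ring.inverse_mul_cancel _ (hdiag (Ne.symm h))
    simp only [Y, of_apply, if_neg h, diagonal_apply_ne _ h]
    linear_combination (-N i j) * this

lemma exists_basis_eq_col [DecidableEq n] {P : Matrix n n R} (hP : IsUnit P.det) :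
    ∃ b : Module.Basis n R (n → R), ∀ k, b k = P.col k := by
  have hP := P.invertibleOfIsUnitDet hP
  refine ⟨(Pi.basisFun R n).map (P.toLinearEquiv' hP), fun k => ?_⟩
  rw [Module.Basis.map_apply, Pi.basisFun_apply, ← mulVec_single_one]
  exact LinearMap.congr_fun (toLinearEquiv'_apply P hP) _

lemma mulVec_col_of_mul_eq_mul_diagonal [DecidableEq n] {M P : Matrix n n R} {δ : n → R}
    (h : M * P = P * diagonal δ) (k : n) : M *ᵥ P.col k = δ k • P.col k := by
  ext i
  have := congrFun (congrFun h i) k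
  rw [mul_diagonal] at this
  simpa [mul_apply, mulVec, dotProduct, mul_comm] using this

section Diagonalization

variable [LinearOrder n] {I : Ideal R} {M : Matrix n n R}

/-- Diagonalizing the upper triangular part of `M` diagonalizes `M` modulo `I`. -/
lemma exists_unitriangular_mul_eq_mul_of_lower_mem (hlow : ∀ i j, j < i → M i j ∈ I)
    (hdiag : Pairwise fun i j => IsUnit (M i i - M j j)) :
    ∃ U N : Matrix n n R, U.IsUpperTriangular ∧ (∀ k, U k k = 1) ∧ M * U = U * N ∧
      ∀ i j, (N - diagonal fun k => M k k) i j ∈ I := by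
  set T : Matrix n n R := of fun i j => if i ≤ j then M i j else 0
  have hT : T.IsUpperTriangular := fun i j hji => if_neg (not_le.mpr hji)
  have hTdiag : ∀ k, T k k = M k k := fun k => by simp [T]
  have hMT : ∀ i j, (M - T) i j ∈ I := fun i j => by
    by_cases h : i ≤ j
    · simp [T, h]
    · simpa [T, h] using hlow i j (not_le.mp h)
  obtain ⟨U, hU, hUdiag, hTU⟩ :=
    hT.exists_unitriangular_mul_diagonal (by simpa [hTdiag] using hdiag)
  have hUdet : IsUnit U.det := by simp [det_of_isUpperTriangular hU, hUdiag]
  refine ⟨U, U⁻¹ * M * U, hU, hUdiag,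
    by rw [Matrix.mul_assoc, mul_nonsing_inv_cancel_left _ _ hUdet], ?_⟩
  have : U⁻¹ * M * U - diagonal (fun k => M k k) = U⁻¹ * (M - T) * U := by
    rw [Matrix.mul_sub, Matrix.sub_mul, Matrix.mul_assoc U⁻¹ T, hTU,
      nonsing_inv_mul_cancel_left _ _ hUdet]
    simp only [hTdiag]
  rw [this]
  exact mul_apply_mem_of_left (mul_apply_mem_of_right hMT _) _

theorem exists_eigenbasis_of_lower_mem (hI : I ^ 2 = ⊥) (hlow : ∀ i j, j < i → M i j ∈ I)
    (hdiag : Pairwise fun i j => IsUnit (M i i - M j j)) {k₀ : n} (hk₀ : ∀ j, k₀ ≤ j) :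
    ∃ (b : Module.Basis n R (n → R)) (δ : n → R), (∀ k, M *ᵥ b k = δ k • b k) ∧
      (Pairwise fun k l => IsUnit (δ k - δ l)) ∧
      ∀ j, b k₀ j - (Pi.single k₀ 1 : n → R) j ∈ I := by
  obtain ⟨U, N, hU, hUdiag, hMU, hN⟩ := exists_unitriangular_mul_eq_mul_of_lower_mem hlow hdiag
  have hNdiag : ∀ k, N k k - M k k ∈ I := fun k => by simpa using hN k k
  have hNunit : Pairwise fun i j => IsUnit (N i i - N j j) := fun i j hij => by
    show IsUnit (N i i - N j j)
    rw [show N i i - N j j = M i i - M j j + (N i i - M i i - (N j j - M j j)) by ring]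
    exact Ideal.isUnit_add_of_isNilpotent (fun x hx => Ideal.isNilpotent_of_sq_eq_bot hI hx)
      (hdiag hij) (I.sub_mem (hNdiag i) (hNdiag j))
  obtain ⟨Y, hY, hNY⟩ := exists_mul_one_add_eq_of_offDiag_mem hI
    (fun i j hij => by simpa [hij] using hN i j) hNunit
  have hYY : Y * Y = 0 := by
    ext i j
    exact Finset.sum_eq_zero fun l _ => Ideal.mul_eq_zero_of_sq_eq_bot hI (hY i l) (hY l j)
  set P := U * (1 + Y)
  have hPdet : IsUnit P.det := by
    have h1 : (1 + Y) * (1 - Y) = 1 := by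
      rw [Matrix.mul_sub, Matrix.mul_one, Matrix.add_mul, Matrix.one_mul, hYY]; abel
    rw [det_mul, det_of_isUpperTriangular hU]
    simpa [hUdiag] using IsUnit.of_mul_eq_one _ (by rw [← det_mul, h1, det_one])
  have hMP : M * P = P * diagonal fun k => N k k := by
    rw [← Matrix.mul_assoc, hMU, Matrix.mul_assoc, hNY, Matrix.mul_assoc]
  obtain ⟨b, hb⟩ := exists_basis_eq_col hPdet
  refine ⟨b, fun k => N k k, fun k => ?_, hNunit, fun j => ?_⟩
  · rw [hb]
    exact mulVec_col_of_mul_eq_mul_diagonal hMP k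
  · have hUk₀ : U j k₀ = (Pi.single k₀ 1 : n → R) j := by
      rcases (hk₀ j).lt_or_eq with h | rfl
      · simp [hU h, h.ne']
      · simp [hUdiag]
    rw [hb, col_apply, show P = U + U * Y by simp [P, Matrix.mul_add], add_apply, hUk₀,
      add_sub_cancel_left]
    exact mul_apply_mem_of_right hY _ _ _

end Diagonalization

end Matrix

lemma Module.End.smul_top_mem_invtSubmodule {A V : Type*} [CommRing A] [AddCommGroup V]
    [Module A V] (f : Module.End A V) (I : Ideal A) :
    I • (⊤ : Submodule A V) ∈ f.invtSubmodule := by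
  rw [Module.End.mem_invtSubmodule_iff_map_le, Submodule.map_smul'']
  exact Submodule.smul_mono le_rfl le_top

lemma pi_mem_smul_top {ι A : Type*} [Fintype ι] [DecidableEq ι] [CommRing A] {I : Ideal A}
    {x : ι → A} (hx : ∀ j, x j ∈ I) : x ∈ I • (⊤ : Submodule A (ι → A)) := by
  rw [pi_eq_sum_univ x]
  exact Submodule.sum_mem _ fun j _ => Submodule.smul_mem_smul (hx j) trivial

namespace Module.Basis

variable {ι A V : Type*} [CommRing A] [AddCommGroup V] [Module A V] (b : Basis ι A V)

noncomputable def coeffIdeal (W : Submodule A V) (k : ι) : Ideal A :=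
  W.comap (LinearMap.toSpanSingleton A V (b k))

noncomputable def submoduleOfCoeffIdeals (J : ι → Ideal A) : Submodule A V :=
  ⨅ k, Submodule.comap (b.coord k) (J k)

variable {b}

@[simp]
lemma mem_coeffIdeal {W : Submodule A V} {k : ι} {a : A} :
    a ∈ b.coeffIdeal W k ↔ a • b k ∈ W :=
  Iff.rfl

lemma coeffIdeal_mono {W W' : Submodule A V} (h : W ≤ W') (k : ι) :
    b.coeffIdeal W k ≤ b.coeffIdeal W' k :=
  Submodule.comap_mono h

lemma coord_mem_of_mem_smul_top {I : Ideal A} {x : V} (hx : x ∈ I • (⊤ : Submodule A V))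
    (k : ι) : b.coord k x ∈ I := by
  refine Submodule.smul_induction_on hx (fun r hr _ _ => ?_) (fun x y hx hy => ?_)
  · rw [map_smul, smul_eq_mul]; exact I.mul_mem_right _ hr
  · rw [map_add]; exact I.add_mem hx hy

lemma coeffIdeal_smul_top (I : Ideal A) (k : ι) : b.coeffIdeal (I • ⊤) k = I := by
  ext a
  refine ⟨fun h => ?_, fun h => Submodule.smul_mem_smul h trivial⟩
  simpa using b.coord_mem_of_mem_smul_top (mem_coeffIdeal.mp h) k

lemma mem_submoduleOfCoeffIdeals {J : ι → Ideal A} {x : V} :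
    x ∈ b.submoduleOfCoeffIdeals J ↔ ∀ k, b.coord k x ∈ J k := by
  simp [submoduleOfCoeffIdeals]

lemma coeffIdeal_submoduleOfCoeffIdeals [DecidableEq ι] (J : ι → Ideal A) (k : ι) :
    b.coeffIdeal (b.submoduleOfCoeffIdeals J) k = J k := by
  ext a
  rw [mem_coeffIdeal, mem_submoduleOfCoeffIdeals]
  refine ⟨fun h => by simpa using h k, fun h l => ?_⟩
  by_cases hl : l = k
  · subst hl; simpa using h
  · simp [Ne.symm hl]

lemma isCompl_submoduleOfCoeffIdeals [Fintype ι] [DecidableEq ι] {J J' : ι → Ideal A}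
    (h : ∀ k, IsCompl (J k) (J' k)) :
    IsCompl (b.submoduleOfCoeffIdeals J) (b.submoduleOfCoeffIdeals J') := by
  constructor
  · rw [Submodule.disjoint_def]
    intro x hx hx'
    rw [mem_submoduleOfCoeffIdeals] at hx hx'
    refine b.ext_elem fun k => ?_
    simpa [← coord_apply] using (h k).disjoint.le_bot ⟨hx k, hx' k⟩
  · rw [codisjoint_iff, eq_top_iff]
    intro x _
    rw [← b.sum_repr x]
    refine Submodule.sum_mem _ fun k _ => ?_
    obtain ⟨y, hy, z, hz, hyz⟩ := Submodule.mem_sup.mp ((h k).codisjoint.eq_top ▸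
      Submodule.mem_top (x := b.coord k x))
    rw [← coord_apply, ← hyz, add_smul]
    exact Submodule.add_mem_sup
      (by rwa [← mem_coeffIdeal, coeffIdeal_submoduleOfCoeffIdeals])
      (by rwa [← mem_coeffIdeal, coeffIdeal_submoduleOfCoeffIdeals])

lemma isUnit_of_apply_eq_smul {f : Module.End A V} (hf : IsUnit f) {k : ι} {μ : A}
    (h : f (b k) = μ • b k) : IsUnit μ := by
  obtain ⟨g, hg⟩ := hf.exists_left_inv
  refine IsUnit.of_mul_eq_one (b.coord k (g (b k))) ?_
  have := congrArg (fun v => b.coord k (g v)) h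
  simp only [← Module.End.mul_apply, hg, Module.End.one_apply, map_smul, smul_eq_mul] at this
  simpa using this.symm

section Eigenbasis

variable {f : Module.End A V} {δ : ι → A} (hf : ∀ k, f (b k) = δ k • b k)
include hf

lemma coord_apply_of_eigen (k : ι) (x : V) : b.coord k (f x) = δ k * b.coord k x := by
  classical
  have : b.coord k ∘ₗ f = δ k • b.coord k := b.ext fun l => by
    by_cases h : l = k
    · subst h; simp [hf]
    · simp [hf, h]
  exact LinearMap.congr_fun this x

lemma submoduleOfCoeffIdeals_mem_invtSubmodule (J : ι → Ideal A) :
    b.submoduleOfCoeffIdeals J ∈ f.invtSubmodule := fun x hx => by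
  simp only [Submodule.mem_comap, mem_submoduleOfCoeffIdeals, coord_apply_of_eigen hf] at hx ⊢
  exact fun k => (J k).mul_mem_left _ (hx k)

variable (hδ : Pairwise fun k l => IsUnit (δ k - δ l))
include hδ

lemma eq_of_apply_eq_smul {v : V} {μ : A} (hv : f v = μ • v) {k : ι}
    (hk : IsUnit (b.coord k v)) : μ = δ k ∧ v = b.coord k v • b k := by
  have hcoord : ∀ l, (δ l - μ) * b.coord l v = 0 := fun l => by
    rw [sub_mul, ← coord_apply_of_eigen hf, hv, map_smul, smul_eq_mul, sub_self]
  have hμ : μ = δ k := by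
    simpa [sub_eq_zero, eq_comm] using hk.mul_left_eq_zero.mp (hcoord k)
  refine ⟨hμ, b.ext_elem fun l => ?_⟩
  by_cases hl : l = k
  · subst hl; simp [← coord_apply]
  · have := (hδ hl).mul_right_eq_zero.mp (hμ ▸ hcoord l)
    simp [← coord_apply, this, Ne.symm hl]

variable [Fintype ι] [DecidableEq ι]

/-- Applying `(f - δ j) / (δ k - δ j)` for all `j ≠ k` in turn kills every coordinate of `x`
but the `k`-th one, which it leaves unchanged. -/
lemma coord_smul_mem_of_mem_invtSubmodule {W : Submodule A V} (hW : W ∈ f.invtSubmodule)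
    {x : V} (hx : x ∈ W) (k : ι) : b.coord k x • b k ∈ W := by
  have key : ∀ s : Finset ι, k ∉ s →
      ∃ y ∈ W, b.coord k y = b.coord k x ∧ ∀ j ∈ s, b.coord j y = 0 := by
    intro s
    induction s using Finset.induction_on with
    | empty => exact fun _ => ⟨x, hx, rfl, by simp⟩
    | insert j s hjs ih =>
      intro hks
      obtain ⟨y, hyW, hyk, hys⟩ := ih fun h => hks (Finset.mem_insert_of_mem h)
      have hjk : k ≠ j := fun h => hks (h ▸ Finset.mem_insert_self k s)
      set u := Ring.inverse (δ k - δ j)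
      have hcoord : ∀ l, b.coord l (u • (f y - δ j • y)) = u * (δ l - δ j) * b.coord l y :=
        fun l => by rw [map_smul, map_sub, map_smul, coord_apply_of_eigen hf]; simp; ring
      refine ⟨u • (f y - δ j • y), W.smul_mem _ (W.sub_mem (hW hyW) (W.smul_mem _ hyW)), ?_, ?_⟩
      · rw [hcoord, Ring.inverse_mul_cancel _ (hδ hjk), one_mul, hyk]
      · intro l hl
        rw [hcoord]
        rcases Finset.mem_insert.mp hl with rfl | hl
        · simp
        · simp [hys l hl]
  obtain ⟨y, hyW, hyk, hy⟩ := key (Finset.univ.erase k) (Finset.notMem_erase k _)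
  convert hyW using 1
  refine b.ext_elem fun l => ?_
  by_cases h : l = k
  · subst h; simp [← hyk]
  · simp [Ne.symm h, ← coord_apply, hy l (Finset.mem_erase.mpr ⟨h, Finset.mem_univ l⟩)]

lemma le_of_forall_coeffIdeal_le {W W' : Submodule A V} (hW : W ∈ f.invtSubmodule)
    (h : ∀ k, b.coeffIdeal W k ≤ b.coeffIdeal W' k) : W ≤ W' := by
  intro x hx
  rw [← b.sum_repr x]
  exact W'.sum_mem fun k _ => h k (coord_smul_mem_of_mem_invtSubmodule hf hδ hW hx k)

lemma coeffIdeal_sup_smul_top {W : Submodule A V} (hW : W ∈ f.invtSubmodule) (I : Ideal A)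
    (k : ι) : b.coeffIdeal (W ⊔ I • ⊤) k = b.coeffIdeal W k ⊔ I := by
  refine le_antisymm (fun a ha => ?_) (sup_le (coeffIdeal_mono le_sup_left k) ?_)
  · obtain ⟨w, hw, n, hn, hwn⟩ := Submodule.mem_sup.mp (mem_coeffIdeal.mp ha)
    have : a = b.coord k w + b.coord k n := by
      simpa using congrArg (b.coord k) hwn.symm
    rw [this]
    exact Submodule.add_mem_sup (coord_smul_mem_of_mem_invtSubmodule hf hδ hW hw k)
      (b.coord_mem_of_mem_smul_top hn k)
  · conv_lhs => rw [← b.coeffIdeal_smul_top I k]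
    exact coeffIdeal_mono le_sup_right k

/-- The idempotent is read off the projection of `q (b k)` onto `W'`. -/
lemma exists_isIdempotentElem_coeffIdeal_comap_eq {Q : Type*} [AddCommGroup Q] [Module A Q]
    {I : Ideal A} (hI : ∀ x ∈ I, IsNilpotent x) {q : V →ₗ[A] Q} (hq : Function.Surjective q)
    (hker : LinearMap.ker q = I • ⊤) {W' C : Submodule A Q} (hWC : IsCompl W' C)
    (hW : W'.comap q ∈ f.invtSubmodule) (k : ι) :
    ∃ e, IsIdempotentElem e ∧ b.coeffIdeal (W'.comap q) k = Ideal.span {e} ⊔ I := by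
  set J := b.coeffIdeal (W'.comap q) k
  obtain ⟨z, hz⟩ := hq (W'.projection C hWC (q (b k)))
  have hzW : z ∈ W'.comap q := by
    rw [Submodule.mem_comap, hz]
    exact Submodule.projection_apply_mem hWC _
  have hc : b.coord k z ∈ J := coord_smul_mem_of_mem_invtSubmodule hf hδ hW hzW k
  have hIJ : I ≤ J := by
    conv_lhs => rw [← b.coeffIdeal_smul_top I k, ← hker]
    exact coeffIdeal_mono (fun x hx => by simp [LinearMap.mem_ker.mp hx]) k
  have hmod : ∀ a ∈ J, a * b.coord k z - a ∈ I := by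
    intro a ha
    have haW : q (a • b k) ∈ W' := mem_coeffIdeal.mp ha
    have hfix : q (a • z) = q (a • b k) := by
      rw [map_smul, hz, ← map_smul, ← map_smul]
      exact Submodule.projection_apply_of_mem_left hWC haW
    have hker' : a • z - a • b k ∈ I • (⊤ : Submodule A V) := by
      rw [← hker, LinearMap.mem_ker, map_sub, hfix, sub_self]
    simpa [mul_comm] using b.coord_mem_of_mem_smul_top hker' k
  obtain ⟨e, he, hec⟩ := Ideal.exists_isIdempotentElem_sub_mem hI (hmod _ hc)
  refine ⟨e, he, le_antisymm (fun a ha => ?_) (sup_le ?_ hIJ)⟩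
  · have : a = e * a + (a * (b.coord k z - e) - (a * b.coord k z - a)) := by ring
    rw [this]
    refine Submodule.add_mem_sup (Ideal.mul_mem_right _ _ (Ideal.mem_span_singleton_self e))
      (I.sub_mem (I.mul_mem_left _ ?_) (hmod a ha))
    simpa using I.neg_mem hec
  · rw [Ideal.span_singleton_le_iff_mem, ← sub_add_cancel e (b.coord k z)]
    exact J.add_mem (hIJ hec) hc

lemma exists_isIdempotentElem_coeffIdeal_eq {W C : Submodule A V} (hWC : IsCompl W C)
    (hW : W ∈ f.invtSubmodule) (k : ι) :
    ∃ e, IsIdempotentElem e ∧ b.coeffIdeal W k = Ideal.span {e} := by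
  have := exists_isIdempotentElem_coeffIdeal_comap_eq hf hδ (I := ⊥) (q := LinearMap.id)
    (fun x hx => by simp [(Submodule.mem_bot A).mp hx]) Function.surjective_id
    (by rw [LinearMap.ker_id, Submodule.bot_smul]) hWC (by rwa [Submodule.comap_id]) k
  simpa only [Submodule.comap_id, sup_bot_eq] using this

variable {I : Ideal A} (hI : ∀ x ∈ I, IsNilpotent x)
include hI

lemma le_of_sup_smul_top_le {W₁ W₂ C₁ C₂ : Submodule A V} (hWC₁ : IsCompl W₁ C₁)
    (hWC₂ : IsCompl W₂ C₂) (hW₁ : W₁ ∈ f.invtSubmodule) (hW₂ : W₂ ∈ f.invtSubmodule)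
    (h : W₁ ⊔ I • ⊤ ≤ W₂ ⊔ I • ⊤) : W₁ ≤ W₂ := by
  refine le_of_forall_coeffIdeal_le hf hδ hW₁ fun k => ?_
  obtain ⟨e₁, he₁, h₁⟩ := exists_isIdempotentElem_coeffIdeal_eq hf hδ hWC₁ hW₁ k
  obtain ⟨e₂, he₂, h₂⟩ := exists_isIdempotentElem_coeffIdeal_eq hf hδ hWC₂ hW₂ k
  have hle := coeffIdeal_mono (b := b) h k
  rw [coeffIdeal_sup_smul_top hf hδ hW₁, coeffIdeal_sup_smul_top hf hδ hW₂, h₁, h₂] at hle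
  rw [h₁, h₂, Ideal.span_singleton_le_iff_mem]
  exact Ideal.mem_span_singleton_of_mem_span_singleton_sup hI he₁ he₂
    (hle (Submodule.mem_sup_left (Ideal.mem_span_singleton_self e₁)))

lemma exists_isCompl_sup_smul_top_eq {W' C' : Submodule A (V ⧸ I • (⊤ : Submodule A V))}
    (hWC' : IsCompl W' C') (hW : W'.comap (I • (⊤ : Submodule A V)).mkQ ∈ f.invtSubmodule) :
    ∃ W ∈ f.invtSubmodule, (∃ C, IsCompl W C) ∧
      W ⊔ I • ⊤ = W'.comap (I • (⊤ : Submodule A V)).mkQ := by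
  choose e he hJ using fun k => exists_isIdempotentElem_coeffIdeal_comap_eq hf hδ hI
    (Submodule.mkQ_surjective _) (Submodule.ker_mkQ _) hWC' hW k
  have hinv := submoduleOfCoeffIdeals_mem_invtSubmodule hf (b := b) fun k => Ideal.span {e k}
  refine ⟨_, hinv,
    ⟨_, isCompl_submoduleOfCoeffIdeals fun k => (he k).isCompl_span_singleton⟩, ?_⟩
  refine le_antisymm
    (le_of_forall_coeffIdeal_le hf hδ (Module.End.invtSubmodule.sup_mem hinv
      (f.smul_top_mem_invtSubmodule I)) fun k => ?_)
    (le_of_forall_coeffIdeal_le hf hδ hW fun k => ?_) <;>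
  rw [coeffIdeal_sup_smul_top hf hδ hinv, coeffIdeal_submoduleOfCoeffIdeals, hJ]

theorem existsUnique_flag_lift {n : ℕ}
    (Fil' : Fin (n + 1) → Submodule A (V ⧸ I • (⊤ : Submodule A V)))
    (hmono : StrictMono Fil') (h0 : Fil' 0 = ⊥) (hlast : Fil' (Fin.last n) = ⊤)
    (hcompl : ∀ i, ∃ c, IsCompl (Fil' i) c)
    (hstab : ∀ i, ((Fil' i).comap (I • (⊤ : Submodule A V)).mkQ).map f ≤
      (Fil' i).comap (I • (⊤ : Submodule A V)).mkQ) :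
    ∃! Fil : Fin (n + 1) → Submodule A V,
      StrictMono Fil ∧ Fil 0 = ⊥ ∧ Fil (Fin.last n) = ⊤ ∧ (∀ i, ∃ c, IsCompl (Fil i) c) ∧
      (∀ i, (Fil i).map f ≤ Fil i) ∧
      ∀ i, (Fil i).map (I • (⊤ : Submodule A V)).mkQ = Fil' i := by
  have hsup : ∀ W : Submodule A V, W ⊔ I • ⊤ =
      (W.map (I • (⊤ : Submodule A V)).mkQ).comap (I • (⊤ : Submodule A V)).mkQ := fun W => by
    rw [Submodule.comap_map_mkQ, sup_comm]
  have hle : ∀ {W₁ W₂ : Submodule A V}, (∃ c, IsCompl W₁ c) → (∃ c, IsCompl W₂ c) →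
      W₁ ∈ f.invtSubmodule → W₂ ∈ f.invtSubmodule → W₁ ⊔ I • ⊤ ≤ W₂ ⊔ I • ⊤ → W₁ ≤ W₂ :=
    fun ⟨_, h₁⟩ ⟨_, h₂⟩ => le_of_sup_smul_top_le hf hδ hI h₁ h₂
  choose L hLinv hLc hLsup using fun i =>
    exists_isCompl_sup_smul_top_eq hf hδ hI (hcompl i).choose_spec
      ((f.mem_invtSubmodule_iff_map_le).mpr (hstab i))
  have hLmap : ∀ i, (L i).map (I • (⊤ : Submodule A V)).mkQ = Fil' i := fun i =>
    Submodule.comap_injective_of_surjective (Submodule.mkQ_surjective _)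
      (by rw [← hsup, hLsup])
  have hLmono : Monotone L := fun i j hij => hle (hLc i) (hLc j) (hLinv i) (hLinv j)
    (by rw [hLsup, hLsup]; exact Submodule.comap_mono (hmono.monotone hij))
  refine ⟨L, ⟨hLmono.strictMono_of_injective fun i j h => hmono.injective
      (by rw [← hLmap, ← hLmap, h]), ?_, ?_, hLc,
      fun i => (f.mem_invtSubmodule_iff_map_le).mp (hLinv i), hLmap⟩, ?_⟩
  · refine le_bot_iff.mp (hle (hLc 0) ⟨⊤, isCompl_bot_top⟩ (hLinv 0)
      (Module.End.invtSubmodule.bot_mem f) ?_)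
    rw [hLsup, h0, Submodule.comap_bot, Submodule.ker_mkQ, bot_sup_eq]
  · refine top_le_iff.mp (hle ⟨⊥, isCompl_top_bot⟩ (hLc _)
      (Module.End.invtSubmodule.top_mem f) (hLinv _) ?_)
    rw [hLsup, hlast, Submodule.comap_top]
    exact le_top
  · rintro G ⟨-, -, -, hGc, hGinv, hGmap⟩
    funext i
    have hGinv' := (f.mem_invtSubmodule_iff_map_le).mpr (hGinv i)
    have hGsup : G i ⊔ I • ⊤ = L i ⊔ I • ⊤ := by rw [hsup, hsup, hGmap, hLmap]
    exact le_antisymm (hle (hGc i) (hLc i) hGinv' (hLinv i) hGsup.le)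
      (hle (hLc i) (hGc i) (hLinv i) hGinv' hGsup.ge)

end Eigenbasis

theorem existsUnique_eigenvector_apply_eq_one [Fintype ι] [DecidableEq ι]
    {b : Basis ι A (ι → A)} {f : Module.End A (ι → A)} {δ : ι → A}
    (hf : ∀ k, f (b k) = δ k • b k) (hδ : Pairwise fun k l => IsUnit (δ k - δ l))
    (hfu : IsUnit f) {I : Ideal A} (hI : ∀ x ∈ I, IsNilpotent x) {k : ι}
    (hbk : ∀ j, b k j - (Pi.single k 1 : ι → A) j ∈ I) :
    ∃! vμ : (ι → A) × A, IsUnit vμ.2 ∧ vμ.1 k = 1 ∧ (∀ j, j ≠ k → vμ.1 j ∈ I) ∧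
      f vμ.1 = vμ.2 • vμ.1 := by
  have hu : IsUnit (b k k) := by
    simpa using Ideal.isUnit_add_of_isNilpotent hI isUnit_one (hbk k)
  have hbI : ∀ j, j ≠ k → b k j ∈ I := fun j hj => by simpa [hj] using hbk j
  set v₀ := Ring.inverse (b k k) • b k
  have hv₀k : v₀ k = 1 := Ring.inverse_mul_cancel _ hu
  refine ⟨(v₀, δ k), ⟨isUnit_of_apply_eq_smul hfu (hf k), hv₀k,
    fun j hj => I.mul_mem_left _ (hbI j hj), by rw [map_smul, hf, smul_comm]⟩, ?_⟩
  rintro ⟨v, μ⟩ ⟨-, hv1, hvI, hfv⟩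
  dsimp only at hv1 hvI hfv
  have hdiff : v - v₀ ∈ I • (⊤ : Submodule A (ι → A)) := pi_mem_smul_top fun j => by
    by_cases hj : j = k
    · subst hj; simp [hv1, hv₀k]
    · exact I.sub_mem (hvI j hj) (I.mul_mem_left _ (hbI j hj))
  have hcoord : IsUnit (b.coord k v) := by
    simpa [v₀] using Ideal.isUnit_add_of_isNilpotent hI hu.ringInverse
      (b.coord_mem_of_mem_smul_top hdiff k)
  obtain ⟨rfl, hv⟩ := eq_of_apply_eq_smul hf hδ hfv hcoord
  have hc : b.coord k v = Ring.inverse (b k k) := by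
    rw [← one_mul (Ring.inverse _), Ring.eq_mul_inverse_iff_mul_eq _ _ _ hu, ← hv1]
    conv_rhs => rw [hv]
    rfl
  refine Prod.ext ?_ rfl
  rw [hv, hc]

end Module.Basis

theorem stmt_11
    (A : Type) [CommRing A] (I : Ideal A) (hI : I ^ 2 = ⊥)
    (d : ℕ) (hd : 0 < d)
    (M : Matrix (Fin d) (Fin d) A) (hMinv : IsUnit M.det)
    (hlow : ∀ i j : Fin d, j < i → M i j ∈ I)
    (hdiag : ∀ i j : Fin d, i ≠ j → IsUnit (M i i - M j j)) :
    (∃! lm : (Fin d → A) × A,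
        IsUnit lm.2 ∧ lm.1 ⟨0, hd⟩ = 1 ∧ (∀ j : Fin d, j ≠ ⟨0, hd⟩ → lm.1 j ∈ I) ∧
        M.mulVec lm.1 = lm.2 • lm.1) ∧
    ∀ Fil' : Fin (d + 1) →
        Submodule A ((Fin d → A) ⧸ (I • (⊤ : Submodule A (Fin d → A)))),
      StrictMono Fil' →
      Fil' 0 = ⊥ → Fil' (Fin.last d) = ⊤ →
      (∀ i, ∃ c, IsCompl (Fil' i) c) →
      (∀ i, (((Fil' i).comap (I • (⊤ : Submodule A (Fin d → A))).mkQ).map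
          M.mulVecLin) ≤ (Fil' i).comap (I • (⊤ : Submodule A (Fin d → A))).mkQ) →
      ∃! Fil : Fin (d + 1) → Submodule A (Fin d → A),
        StrictMono Fil ∧ Fil 0 = ⊥ ∧ Fil (Fin.last d) = ⊤ ∧
        (∀ i, ∃ c, IsCompl (Fil i) c) ∧
        (∀ i, (Fil i).map M.mulVecLin ≤ Fil i) ∧
        ∀ i, (Fil i).map (I • (⊤ : Submodule A (Fin d → A))).mkQ = Fil' i := by
  have hnil : ∀ x ∈ I, IsNilpotent x := fun x hx => Ideal.isNilpotent_of_sq_eq_bot hI hx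
  obtain ⟨b, δ, hb, hδ, hb₀⟩ := Matrix.exists_eigenbasis_of_lower_mem hI hlow
    (fun i j hij => hdiag i j hij) (k₀ := ⟨0, hd⟩) fun j => Nat.zero_le j
  have hf : ∀ k, M.mulVecLin (b k) = δ k • b k := hb
  have hfu : IsUnit M.mulVecLin :=
    ((Matrix.isUnit_iff_isUnit_det M).mpr hMinv).map Matrix.toLinAlgEquiv'
  exact ⟨b.existsUnique_eigenvector_apply_eq_one hf hδ hfu hnil hb₀,
    fun Fil' => b.existsUnique_flag_lift hf hδ hnil Fil'⟩
end
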